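/- Let r > 4, θ > 0 and σ > 0. If x > 0 satisfies (√(θ² + σ²)/θ) · K_{(r−3)/2}((√(θ² + σ²)/σ²)·x) / K_{(r−1)/2}((√(θ² + σ²)/σ²)·x) = 1 (the mode equation of the variance-gamma distribution VG(r, θ, σ, 0)), then x > (θ/2)·[r − 2 + √((θ²(r − 2)² + σ²(r − 4)²)/(θ² + σ²))]. Equality holds if r = 4 and the inequality is reversed for 2 < r < 4. -/

import Mathlib

open Real MeasureTheory

/-- Modified Bessel function of the second kind. -/
noncomputable def besselK (ν x : ℝ) : ℝ :=
  ∫ t in Set.Ioi (0:ℝ), Real.exp (-x * Real.cosh t) * Real.cosh (ν * t)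

open Set Filter Topology Asymptotics

/-!
Put `y = √(θ² + σ²) x / σ²` and `ν = (r - 3) / 2`. The recurrence
`y (K_{ν+1}(y) - K_{ν-1}(y)) = 2ν K_ν(y)` turns the mode equation into a formula for
`K_{ν-1}(y) / K_ν(y)`.

For `λ > -1/2` the function `W = x (K_{λ+1}² - K_λ²) - (2λ + 1) K_λ K_{λ+1}` has derivative
`(2λ + 1) K_λ K_{λ+1} / x > 0` and tends to `0` at infinity, so `W < 0`; this is the ratio bound
`x K_{λ+1}(x) < (λ + 1/2 + √((λ + 1/2)² + x²)) K_λ(x)`. Through `K_{-λ} = K_λ` the bound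
reverses for `λ < -1/2` and is an equality at `λ = -1/2`.

With `λ = ν - 1` this says that `φ(y) = √(θ² + σ²) y - θ √(((r - 4)/2)² + y²)` is above, at or
below `(r - 2) θ / 2` according to the sign of `r - 4`. As `φ` is strictly increasing and takes
the value `(r - 2) θ / 2` exactly at the point corresponding to the claimed bound, `x` lies on
the same side of the bound.
-/

lemma abs_sinh_le_cosh (u : ℝ) : |sinh u| ≤ cosh u := by
  have := exp_pos u
  rw [← sinh_add_cosh] at this
  exact abs_le.2 ⟨by linarith, (sinh_lt_cosh u).le⟩

lemma cosh_mul_le_exp (ν : ℝ) {t : ℝ} (ht : 0 ≤ t) : cosh (ν * t) ≤ exp (|ν| * t) := by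
  rw [← cosh_abs, abs_mul, abs_of_nonneg ht]
  linarith [exp_sub_cosh (|ν| * t), sinh_nonneg_iff.2 (by positivity : 0 ≤ |ν| * t)]

lemma cosh_mul_cosh_mul_le (ν : ℝ) {t : ℝ} (ht : 0 ≤ t) :
    cosh t * cosh (ν * t) ≤ exp ((1 + |ν|) * t) := by
  rw [add_mul, exp_add]
  exact mul_le_mul (by simpa using cosh_mul_le_exp 1 ht) (cosh_mul_le_exp ν ht)
    (cosh_pos _).le (exp_pos _).le

lemma exp_neg_mul_cosh_mul_exp_le {x : ℝ} (hx : 0 < x) (c : ℝ) {t : ℝ} (ht : 0 ≤ t) :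
    exp (-x * cosh t) * exp (c * t) ≤ exp ((c + 1) ^ 2 / x - x) * exp (-t) := by
  rw [← exp_add, ← exp_add, exp_le_exp]
  have hcosh : 1 + t ^ 2 / 4 ≤ cosh t := by
    rw [cosh_eq]; nlinarith [quadratic_le_exp_of_nonneg ht, add_one_le_exp (-t)]
  -- completing the square: `x t² / 4 - (c + 1) t + (c + 1)² / x = (x t / 2 - (c + 1))² / x`
  have hsq : (c + 1) ^ 2 / x * x = (c + 1) ^ 2 := div_mul_cancel₀ _ hx.ne'
  nlinarith [sq_nonneg (c + 1 - x * t / 2), mul_le_mul_of_nonneg_left hcosh hx.le]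

lemma integrableOn_exp_neg_mul_cosh_mul {f : ℝ → ℝ} (hf : Continuous f) {x : ℝ} (hx : 0 < x)
    (c : ℝ) (hb : ∀ t, 0 ≤ t → |f t| ≤ exp (c * t)) :
    IntegrableOn (fun t => exp (-x * cosh t) * f t) (Ioi 0) := by
  refine Integrable.mono' ((exp_neg_integrableOn_Ioi 0 one_pos).const_mul
    (exp ((c + 1) ^ 2 / x - x))) (by fun_prop : Continuous _).aestronglyMeasurable ?_
  filter_upwards [ae_restrict_mem measurableSet_Ioi] with t ht
  rw [norm_mul, norm_of_nonneg (exp_pos _).le, norm_eq_abs]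
  calc exp (-x * cosh t) * |f t| ≤ exp (-x * cosh t) * exp (c * t) :=
        mul_le_mul_of_nonneg_left (hb t ht.le) (exp_pos _).le
    _ ≤ _ := by simpa using exp_neg_mul_cosh_mul_exp_le hx c ht.le

lemma integrableOn_besselK_integrand (ν : ℝ) {x : ℝ} (hx : 0 < x) :
    IntegrableOn (fun t => exp (-x * cosh t) * cosh (ν * t)) (Ioi 0) :=
  integrableOn_exp_neg_mul_cosh_mul (by fun_prop) hx |ν| fun t ht => by
    rw [abs_of_pos (cosh_pos _)]; exact cosh_mul_le_exp ν ht

lemma besselK_pos (ν : ℝ) {x : ℝ} (hx : 0 < x) : 0 < besselK ν x := by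
  have hsupp : Function.support (fun t => exp (-x * cosh t) * cosh (ν * t)) = univ :=
    Function.support_eq_univ fun t => (mul_pos (exp_pos _) (cosh_pos _)).ne'
  rw [besselK, setIntegral_pos_iff_support_of_nonneg_ae
    (ae_of_all _ fun t => (mul_pos (exp_pos _) (cosh_pos _)).le)
    (integrableOn_besselK_integrand ν hx), hsupp]
  simp

lemma besselK_neg (ν x : ℝ) : besselK (-ν) x = besselK ν x := by
  simp [besselK, neg_mul, cosh_neg]

lemma besselK_le_exp_sub_mul (ν : ℝ) {x₀ x : ℝ} (hx₀ : 0 < x₀) (h : x₀ ≤ x) :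
    besselK ν x ≤ exp (x₀ - x) * besselK ν x₀ := by
  rw [besselK, besselK, ← integral_const_mul]
  refine setIntegral_mono_on (integrableOn_besselK_integrand ν (hx₀.trans_le h))
    ((integrableOn_besselK_integrand ν hx₀).const_mul _) measurableSet_Ioi fun t _ => ?_
  rw [← mul_assoc, ← exp_add]
  gcongr
  nlinarith [one_le_cosh t]

lemma besselK_isBigO_exp_neg (ν : ℝ) : besselK ν =O[atTop] fun x => exp (-x) := by
  refine IsBigO.of_bound (exp 1 * besselK ν 1) ?_
  filter_upwards [eventually_ge_atTop 1] with x hx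
  rw [norm_of_nonneg (besselK_pos ν (by linarith)).le, norm_of_nonneg (exp_pos _).le]
  calc besselK ν x ≤ exp (1 - x) * besselK ν 1 := besselK_le_exp_sub_mul ν one_pos hx
    _ = exp 1 * besselK ν 1 * exp (-x) := by rw [sub_eq_add_neg, exp_add]; ring

lemma mul_integral_sinh_mul_sinh (ν : ℝ) {x : ℝ} (hx : 0 < x) :
    x * ∫ t in Ioi 0, exp (-x * cosh t) * (sinh t * sinh (ν * t)) = ν * besselK ν x := by
  set f : ℝ → ℝ := fun t => exp (-x * cosh t) * sinh (ν * t)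
  set f' : ℝ → ℝ := fun t => ν * (exp (-x * cosh t) * cosh (ν * t)) -
    x * (exp (-x * cosh t) * (sinh t * sinh (ν * t)))
  have hderiv (t : ℝ) : HasDerivAt f (f' t) t := by
    have h := (((hasDerivAt_cosh t).const_mul (-x)).exp).mul
      ((hasDerivAt_sinh (ν * t)).comp t ((hasDerivAt_id t).const_mul ν))
    exact h.congr_deriv (by simp only [f', Function.comp_apply]; ring)
  have hsinh : IntegrableOn (fun t => exp (-x * cosh t) * (sinh t * sinh (ν * t))) (Ioi 0) :=
    integrableOn_exp_neg_mul_cosh_mul (by fun_prop) hx (1 + |ν|) fun t ht => by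
      rw [abs_mul]
      exact (mul_le_mul (abs_sinh_le_cosh t) (abs_sinh_le_cosh _) (abs_nonneg _)
        (cosh_pos _).le).trans (cosh_mul_cosh_mul_le ν ht)
  have hf' : IntegrableOn f' (Ioi 0) :=
    ((integrableOn_besselK_integrand ν hx).const_mul ν).sub (hsinh.const_mul x)
  have hf : IntegrableOn f (Ioi 0) :=
    integrableOn_exp_neg_mul_cosh_mul (by fun_prop) hx |ν| fun t ht =>
      (abs_sinh_le_cosh _).trans (cosh_mul_le_exp ν ht)
  have hftc := integral_Ioi_of_hasDerivAt_of_tendsto' (fun t _ => hderiv t) hf'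
    (tendsto_zero_of_hasDerivAt_of_integrableOn_Ioi (fun t _ => hderiv t) hf' hf)
  rw [integral_sub ((integrableOn_besselK_integrand ν hx).const_mul ν) (hsinh.const_mul x),
    integral_const_mul, integral_const_mul] at hftc
  simp only [f, mul_zero, sinh_zero, sub_zero] at hftc
  rw [besselK]; linarith

lemma mul_besselK_add_one_sub_besselK_sub_one (ν : ℝ) {x : ℝ} (hx : 0 < x) :
    x * (besselK (ν + 1) x - besselK (ν - 1) x) = 2 * ν * besselK ν x := by
  have h : besselK (ν + 1) x - besselK (ν - 1) x =
      2 * ∫ t in Ioi 0, exp (-x * cosh t) * (sinh t * sinh (ν * t)) := by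
    rw [besselK, besselK, ← integral_sub (integrableOn_besselK_integrand _ hx)
      (integrableOn_besselK_integrand _ hx), ← integral_const_mul]
    congr 1; funext t
    rw [add_mul, sub_mul, one_mul, cosh_add, cosh_sub]; ring
  rw [h, mul_left_comm, mul_integral_sinh_mul_sinh ν hx, mul_assoc]

lemma hasDerivAt_besselK (ν : ℝ) {x : ℝ} (hx : 0 < x) :
    HasDerivAt (besselK ν) (-(besselK (ν + 1) x + besselK (ν - 1) x) / 2) x := by
  have hbound : IntegrableOn (fun t => exp (-(x / 2) * cosh t) * (cosh t * cosh (ν * t)))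
      (Ioi 0) :=
    integrableOn_exp_neg_mul_cosh_mul (by fun_prop) (half_pos hx) (1 + |ν|) fun t ht => by
      rw [abs_of_pos (mul_pos (cosh_pos _) (cosh_pos _))]; exact cosh_mul_cosh_mul_le ν ht
  have hdom (t : ℝ) : ∀ y ∈ Metric.ball x (x / 2),
      ‖-(exp (-y * cosh t) * (cosh t * cosh (ν * t)))‖ ≤
        exp (-(x / 2) * cosh t) * (cosh t * cosh (ν * t)) := by
    intro y hy
    rw [Metric.mem_ball, Real.dist_eq, abs_lt] at hy
    rw [norm_neg, norm_of_nonneg (by positivity)]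
    gcongr
    nlinarith [cosh_pos t]
  have hderiv (t y : ℝ) : HasDerivAt (fun y => exp (-y * cosh t) * cosh (ν * t))
      (-(exp (-y * cosh t) * (cosh t * cosh (ν * t)))) y :=
    ((((hasDerivAt_neg y).mul_const (cosh t)).exp).mul_const (cosh (ν * t))).congr_deriv
      (by ring)
  obtain ⟨-, h⟩ := hasDerivAt_integral_of_dominated_loc_of_deriv_le
    (F := fun y t => exp (-y * cosh t) * cosh (ν * t))
    (Metric.ball_mem_nhds x (half_pos hx))
    (Eventually.of_forall fun y => (by fun_prop : Continuous _).aestronglyMeasurable)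
    (integrableOn_besselK_integrand ν hx) (by fun_prop : Continuous _).aestronglyMeasurable
    (ae_of_all _ hdom) hbound (ae_of_all _ fun t y _ => hderiv t y)
  refine h.congr_deriv ?_
  rw [besselK, besselK, ← integral_add (integrableOn_besselK_integrand _ hx)
    (integrableOn_besselK_integrand _ hx), ← integral_neg, ← integral_div]
  congr 1; funext t
  rw [add_mul, sub_mul, one_mul, cosh_add, cosh_sub]; ring

/-- `K_ν(x)² q(K_{ν+1}(x) / K_ν(x))` for the quadratic `q(u) = x u² - (2ν + 1) u - x`, whose
positive root is the bound of `mul_besselK_add_one_lt`. -/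
noncomputable def besselKQuad (ν x : ℝ) : ℝ :=
  x * besselK (ν + 1) x ^ 2 - (2 * ν + 1) * (besselK ν x * besselK (ν + 1) x) -
    x * besselK ν x ^ 2

lemma hasDerivAt_besselKQuad (ν : ℝ) {x : ℝ} (hx : 0 < x) :
    HasDerivAt (besselKQuad ν) ((2 * ν + 1) * (besselK ν x * besselK (ν + 1) x) / x) x := by
  have hA := hasDerivAt_besselK ν hx
  have hB := hasDerivAt_besselK (ν + 1) hx
  have hrecA := mul_besselK_add_one_sub_besselK_sub_one ν hx
  have hrecB := mul_besselK_add_one_sub_besselK_sub_one (ν + 1) hx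
  rw [add_sub_cancel_right] at hB hrecB
  rw [show besselK (ν - 1) x = besselK (ν + 1) x - 2 * ν * besselK ν x / x by
    field_simp; linarith] at hA
  rw [show besselK (ν + 1 + 1) x = besselK ν x + 2 * (ν + 1) * besselK (ν + 1) x / x by
    field_simp; linarith] at hB
  refine ((((hasDerivAt_id x).mul (hB.pow 2)).sub ((hA.mul hB).const_mul (2 * ν + 1))).sub
    ((hasDerivAt_id x).mul (hA.pow 2))).congr_deriv ?_
  simp only [id_eq, Pi.pow_apply]
  field_simp
  ring

lemma tendsto_besselKQuad_atTop (ν : ℝ) : Tendsto (besselKQuad ν) atTop (𝓝 0) := by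
  have hA := besselK_isBigO_exp_neg ν
  have hB := besselK_isBigO_exp_neg (ν + 1)
  have hexp : Tendsto (fun x : ℝ => exp (-x) ^ 2) atTop (𝓝 0) := by
    simpa using tendsto_exp_neg_atTop_nhds_zero.pow 2
  have hxexp : Tendsto (fun x : ℝ => x * exp (-x) ^ 2) atTop (𝓝 0) := by
    simpa [pow_two, ← mul_assoc] using
      (tendsto_pow_mul_exp_neg_atTop_nhds_zero 1).mul tendsto_exp_neg_atTop_nhds_zero
  have h1 := ((isBigO_refl (fun x : ℝ => x) atTop).mul (hB.pow 2)).trans_tendsto hxexp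
  have h2 := ((hA.mul hB).const_mul_left (2 * ν + 1)).trans_tendsto
    (by simpa [← pow_two] using hexp)
  have h3 := ((isBigO_refl (fun x : ℝ => x) atTop).mul (hA.pow 2)).trans_tendsto hxexp
  have h := (h1.sub h2).sub h3
  rw [sub_zero, sub_zero] at h
  exact h

lemma besselKQuad_neg {ν : ℝ} (hν : -(1 / 2) < ν) {x : ℝ} (hx : 0 < x) :
    besselKQuad ν x < 0 := by
  have hmono : StrictMonoOn (besselKQuad ν) (Ioi 0) :=
    strictMonoOn_of_deriv_pos (convex_Ioi 0)
      (fun y hy => (hasDerivAt_besselKQuad ν hy).continuousAt.continuousWithinAt)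
      fun y hy => by
        rw [interior_Ioi] at hy
        rw [(hasDerivAt_besselKQuad ν hy).deriv]
        exact div_pos (mul_pos (by linarith)
          (mul_pos (besselK_pos ν hy) (besselK_pos (ν + 1) hy))) hy
  have hx1 : (0 : ℝ) < x + 1 := by linarith
  calc besselKQuad ν x < besselKQuad ν (x + 1) := hmono hx hx1 (lt_add_one x)
    _ ≤ 0 := ge_of_tendsto (tendsto_besselKQuad_atTop ν) <|
        (eventually_gt_atTop (x + 1)).mono fun y hy =>
          (hmono hx1 (hx1.trans hy) hy).le

lemma abs_lt_sqrt_sq_add_sq (μ : ℝ) {y : ℝ} (hy : y ≠ 0) : |μ| < √(μ ^ 2 + y ^ 2) := by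
  rw [← sqrt_sq_eq_abs]
  exact sqrt_lt_sqrt (sq_nonneg μ) ((lt_add_iff_pos_right _).2 (by positivity))

lemma mul_besselK_add_one_lt {ν : ℝ} (hν : -(1 / 2) < ν) {x : ℝ} (hx : 0 < x) :
    x * besselK (ν + 1) x < (ν + 1 / 2 + √((ν + 1 / 2) ^ 2 + x ^ 2)) * besselK ν x := by
  set R := √((ν + 1 / 2) ^ 2 + x ^ 2)
  have hR : R ^ 2 = (ν + 1 / 2) ^ 2 + x ^ 2 := sq_sqrt (by positivity)
  have hμR : ν + 1 / 2 < R := (le_abs_self _).trans_lt (abs_lt_sqrt_sq_add_sq _ hx.ne')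
  have hA := besselK_pos ν hx
  have hB := besselK_pos (ν + 1) hx
  -- `x · besselKQuad` factors over the roots `(ν + 1/2 ± R) / x` of the quadratic
  have hfactor : (x * besselK (ν + 1) x - (ν + 1 / 2 + R) * besselK ν x) *
      (x * besselK (ν + 1) x + (R - (ν + 1 / 2)) * besselK ν x) = x * besselKQuad ν x := by
    unfold besselKQuad; linear_combination -besselK ν x ^ 2 * hR
  have hpos : 0 < x * besselK (ν + 1) x + (R - (ν + 1 / 2)) * besselK ν x := by
    linarith [mul_pos hx hB, mul_pos (sub_pos.2 hμR) hA]
  have hneg : (x * besselK (ν + 1) x - (ν + 1 / 2 + R) * besselK ν x) *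
      (x * besselK (ν + 1) x + (R - (ν + 1 / 2)) * besselK ν x) < 0 := by
    rw [hfactor]; exact mul_neg_of_pos_of_neg hx (besselKQuad_neg hν hx)
  linarith [neg_of_mul_neg_left hneg hpos.le]

lemma cmp_besselK_ratio (ν : ℝ) {x : ℝ} (hx : 0 < x) :
    cmp ((ν + 1 / 2 + √((ν + 1 / 2) ^ 2 + x ^ 2)) * besselK ν x) (x * besselK (ν + 1) x) =
      cmp (ν + 1 / 2) 0 := by
  rcases lt_trichotomy (ν + 1 / 2) 0 with hμ | hμ | hμ
  · have h := mul_besselK_add_one_lt (ν := -ν - 1) (by linarith) hx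
    rw [show -ν - 1 + 1 = -ν by ring, besselK_neg, show -ν - 1 = -(ν + 1) by ring, besselK_neg,
      show -(ν + 1) + 1 / 2 = -(ν + 1 / 2) by ring, neg_sq] at h
    set μ := ν + 1 / 2
    set R := √(μ ^ 2 + x ^ 2)
    have hR : R ^ 2 = μ ^ 2 + x ^ 2 := sq_sqrt (by positivity)
    have hμR : 0 < μ + R := by linarith [neg_abs_le μ, abs_lt_sqrt_sq_add_sq μ hx.ne']
    have h' : x * ((μ + R) * besselK ν x) < x * (x * besselK (ν + 1) x) := by
      linear_combination mul_lt_mul_of_pos_left h hμR + besselK (ν + 1) x * hR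
    rw [(cmp_eq_lt_iff _ _).2 hμ, cmp_eq_lt_iff]
    exact lt_of_mul_lt_mul_left h' hx.le
  · have hν : ν + 1 = -ν := by linarith
    rw [hμ, hν, besselK_neg, zero_pow two_ne_zero, zero_add, zero_add, sqrt_sq hx.le,
      cmp_self_eq_eq, cmp_self_eq_eq]
  · rw [(cmp_eq_gt_iff _ _).2 hμ, cmp_eq_gt_iff]
    exact mul_besselK_add_one_lt (by linarith) hx

lemma cmp_mul_sub_mul_sqrt_of_besselK_mode {s θ ν y : ℝ} (hθ : 0 < θ) (hy : 0 < y)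
    (hmode : s * besselK ν y = θ * besselK (ν + 1) y) :
    cmp (s * y - θ * √((ν - 1 / 2) ^ 2 + y ^ 2)) ((ν + 1 / 2) * θ) = cmp (ν - 1 / 2) 0 := by
  have hratio := cmp_besselK_ratio (ν - 1) hy
  rw [show ν - 1 + 1 / 2 = ν - 1 / 2 by ring, sub_add_cancel] at hratio
  set R := √((ν - 1 / 2) ^ 2 + y ^ 2)
  have hR : R ^ 2 = (ν - 1 / 2) ^ 2 + y ^ 2 := sq_sqrt (by positivity)
  have hμR : 0 < ν - 1 / 2 + R := by
    linarith [neg_abs_le (ν - 1 / 2), abs_lt_sqrt_sq_add_sq (ν - 1 / 2) hy.ne']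
  have hK := besselK_pos ν hy
  have hrec := mul_besselK_add_one_sub_besselK_sub_one ν hy
  calc cmp (s * y - θ * R) ((ν + 1 / 2) * θ)
      = cmp ((ν - 1 / 2 + R) * besselK ν y * (s * y - θ * R))
          ((ν - 1 / 2 + R) * besselK ν y * ((ν + 1 / 2) * θ)) :=
        (cmp_mul_pos_left (mul_pos hμR hK) _ _).symm
    _ = cmp (θ * y * ((ν - 1 / 2 + R) * besselK (ν - 1) y)) (θ * y * (y * besselK ν y)) := by
        rw [← cmp_sub_zero, ← cmp_sub_zero (θ * y * _)]
        congr 1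
        linear_combination -θ * besselK ν y * hR + (ν - 1 / 2 + R) * (θ * hrec + y * hmode)
    _ = cmp (ν - 1 / 2) 0 := by rw [cmp_mul_pos_left (mul_pos hθ hy), hratio]

lemma strictMono_mul_sub_mul_sqrt {s θ : ℝ} (hθ : 0 ≤ θ) (hθs : θ < s) (μ : ℝ) :
    StrictMono fun y => s * y - θ * √(μ ^ 2 + y ^ 2) := by
  intro y y' hyy'
  have hR := sq_sqrt (by positivity : 0 ≤ μ ^ 2 + y ^ 2)
  have hR' := sq_sqrt (by positivity : 0 ≤ μ ^ 2 + y' ^ 2)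
  have hy := abs_le_sqrt (le_add_of_nonneg_left (sq_nonneg μ) : y ^ 2 ≤ μ ^ 2 + y ^ 2)
  have hy' := abs_le_sqrt (le_add_of_nonneg_left (sq_nonneg μ) : y' ^ 2 ≤ μ ^ 2 + y' ^ 2)
  have hlip : √(μ ^ 2 + y' ^ 2) - √(μ ^ 2 + y ^ 2) ≤ y' - y := by
    nlinarith [le_abs_self y, le_abs_self y', neg_abs_le y, sqrt_nonneg (μ ^ 2 + y ^ 2)]
  dsimp only
  nlinarith

noncomputable def vgModeBound (r θ σ : ℝ) : ℝ :=
  θ / 2 * (r - 2 + √((θ ^ 2 * (r - 2) ^ 2 + σ ^ 2 * (r - 4) ^ 2) / (θ ^ 2 + σ ^ 2)))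

lemma mul_sub_mul_sqrt_vgModeBound {r θ σ s : ℝ} (hr : 2 ≤ r) (hθ : 0 < θ) (hσ : 0 < σ)
    (hs : s ^ 2 = θ ^ 2 + σ ^ 2) :
    s * (s / σ ^ 2 * vgModeBound r θ σ) -
        θ * √(((r - 4) / 2) ^ 2 + (s / σ ^ 2 * vgModeBound r θ σ) ^ 2) = (r - 2) / 2 * θ := by
  set d := √((θ ^ 2 * (r - 2) ^ 2 + σ ^ 2 * (r - 4) ^ 2) / (θ ^ 2 + σ ^ 2))
  have hd : s ^ 2 * d ^ 2 = θ ^ 2 * (r - 2) ^ 2 + σ ^ 2 * (r - 4) ^ 2 := by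
    rw [sq_sqrt (by positivity), hs]; field_simp
  have hx₀ : vgModeBound r θ σ = θ / 2 * (r - 2 + d) := rfl
  set y := s / σ ^ 2 * vgModeBound r θ σ
  have hy : σ ^ 2 * y = s * (θ / 2 * (r - 2 + d)) := by
    simp only [y, hx₀]; field_simp
  have hsub : σ ^ 2 * (s * y - (r - 2) / 2 * θ) = θ * ((r - 2) * θ ^ 2 + s ^ 2 * d) / 2 := by
    linear_combination s * hy + (r - 2) * θ / 2 * hs
  have hsq : σ ^ 2 * σ ^ 2 * (θ ^ 2 * (((r - 4) / 2) ^ 2 + y ^ 2)) =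
      σ ^ 2 * σ ^ 2 * (s * y - (r - 2) / 2 * θ) ^ 2 := by
    linear_combination θ ^ 2 * (σ ^ 2 * y + s * (θ / 2 * (r - 2 + d))) * hy -
      (σ ^ 2 * (s * y - (r - 2) / 2 * θ) + θ * ((r - 2) * θ ^ 2 + s ^ 2 * d) / 2) * hsub
      - θ ^ 2 / 4 * (σ ^ 2 * hd + (s ^ 2 * d ^ 2 - (r - 2) ^ 2 * θ ^ 2) * hs)
  have hnonneg : 0 ≤ s * y - (r - 2) / 2 * θ := by
    have hd₀ : 0 ≤ d := sqrt_nonneg _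
    have hr₀ : 0 ≤ r - 2 := by linarith
    refine (mul_nonneg_iff_of_pos_left (by positivity : 0 < σ ^ 2)).1 ?_
    rw [hsub]; positivity
  have hθR : √(θ ^ 2 * (((r - 4) / 2) ^ 2 + y ^ 2)) = s * y - (r - 2) / 2 * θ := by
    rw [mul_left_cancel₀ (by positivity) hsq, sqrt_sq hnonneg]
  rw [sqrt_mul (sq_nonneg θ), sqrt_sq hθ.le] at hθR
  linarith

theorem stmt_11 (r θ σ : ℝ) (hθ : 0 < θ) (hσ : 0 < σ) (x : ℝ) (hx : 0 < x)
    (hmode : Real.sqrt (θ ^ 2 + σ ^ 2) / θ *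
        (besselK ((r - 3) / 2) (Real.sqrt (θ ^ 2 + σ ^ 2) / σ ^ 2 * x) /
          besselK ((r - 1) / 2) (Real.sqrt (θ ^ 2 + σ ^ 2) / σ ^ 2 * x)) = 1) :
    (4 < r → x > θ / 2 * (r - 2 +
      Real.sqrt ((θ ^ 2 * (r - 2) ^ 2 + σ ^ 2 * (r - 4) ^ 2) / (θ ^ 2 + σ ^ 2)))) ∧
    (r = 4 → x = θ / 2 * (r - 2 +
      Real.sqrt ((θ ^ 2 * (r - 2) ^ 2 + σ ^ 2 * (r - 4) ^ 2) / (θ ^ 2 + σ ^ 2)))) ∧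
    (2 < r ∧ r < 4 → x < θ / 2 * (r - 2 +
      Real.sqrt ((θ ^ 2 * (r - 2) ^ 2 + σ ^ 2 * (r - 4) ^ 2) / (θ ^ 2 + σ ^ 2)))) := by
  set s := √(θ ^ 2 + σ ^ 2)
  have hs : s ^ 2 = θ ^ 2 + σ ^ 2 := sq_sqrt (by positivity)
  have hθs : θ < s := (lt_sqrt hθ.le).2 (lt_add_of_pos_right _ (by positivity))
  have hscale : 0 < s / σ ^ 2 := by positivity
  set y := s / σ ^ 2 * x
  have hy : 0 < y := mul_pos hscale hx
  have hmode' : s * besselK ((r - 3) / 2) y = θ * besselK ((r - 3) / 2 + 1) y := by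
    have hQ := besselK_pos ((r - 1) / 2) hy
    rw [show (r - 3) / 2 + 1 = (r - 1) / 2 by ring]
    field_simp at hmode
    linarith
  have key (hr : 2 < r) : cmp x (vgModeBound r θ σ) = cmp r 4 := by
    have hφ := cmp_mul_sub_mul_sqrt_of_besselK_mode hθ hy hmode'
    rw [show (r - 3) / 2 - 1 / 2 = (r - 4) / 2 by ring,
      show (r - 3) / 2 + 1 / 2 = (r - 2) / 2 by ring,
      ← mul_sub_mul_sqrt_vgModeBound hr.le hθ hσ hs,
      (strictMono_mul_sub_mul_sqrt hθ.le hθs _).cmp_map_eq] at hφ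
    rw [← cmp_mul_pos_left hscale, hφ, ← cmp_mul_pos_left two_pos, mul_zero,
      mul_div_cancel₀ _ two_ne_zero, cmp_sub_zero]
  refine ⟨fun hr => ?_, fun hr => ?_, fun hr => ?_⟩
  · exact (cmp_eq_gt_iff _ _).1 ((key (by linarith)).trans ((cmp_eq_gt_iff _ _).2 hr))
  · exact (cmp_eq_eq_iff _ _).1 ((key (by linarith)).trans ((cmp_eq_eq_iff _ _).2 hr))
  · exact (cmp_eq_lt_iff _ _).1 ((key hr.1).trans ((cmp_eq_lt_iff _ _).2 hr.2))
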